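/- arXiv:2005.01963 — 2 statements merged into one kernel-verified Lean document; each statement's English description precedes it below -/
import Mathlib

section
/- Let L be a finite Galois extension of ℚ with Galois group G, and let H ≤ G be a subgroup such that G acts faithfully on G/H. If the cardinality of G/H is a prime number, then the pair (G,H) is ℚ-trivial. -/
noncomputable section

open Polynomial

/-- `z` is a root of rational: some positive power of `z` is rational. -/
def IsRootOfRational (z : ℂ) : Prop := ∃ k : ℕ, 0 < k ∧ ∃ q : ℚ, z ^ k = (q : ℂ)

/-- `z` is a rational number (viewed in `ℂ`). -/
def IsRat (z : ℂ) : Prop := ∃ q : ℚ, z = (q : ℂ)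

/-- The Galois-like group `G_f`: permutations of the (indexed) roots preserving all
multiplicative relations. -/
def GaloisLike {ι : Type*} [Fintype ι] (r : ι → ℂ) : Set (Equiv.Perm ι) :=
  {σ | ∀ v : ι → ℤ, (∏ i, r i ^ v i) = 1 → (∏ i, r (σ i) ^ v i) = 1}

/-- The Galois-like group `G_f^B`. -/
def GaloisLikeB {ι : Type*} [Fintype ι] (r : ι → ℂ) : Set (Equiv.Perm ι) :=
  {σ | ∀ v : ι → ℤ, IsRat (∏ i, r i ^ v i) → (∏ i, r (σ i) ^ v i) = ∏ i, r i ^ v i}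

/-- The Galois-like group `G_f^ℚ`. -/
def GaloisLikeQ {ι : Type*} [Fintype ι] (r : ι → ℂ) : Set (Equiv.Perm ι) :=
  {σ | ∀ v : ι → ℤ, IsRat (∏ i, r i ^ v i) → IsRat (∏ i, r (σ i) ^ v i)}

/-- The exponent lattice of the vector `w` is trivial. -/
def VecLatticeTrivial {ι : Type*} [Fintype ι] (w : ι → ℂ) : Prop :=
  ∀ u : ι → ℤ, (∏ i, w i ^ u i) = 1 → ∀ i j : ι, u i = u j

/-- The lattice `R_w^ℚ` of the vector `w` is trivial. -/
def VecLatticeQTrivial {ι : Type*} [Fintype ι] (w : ι → ℂ) : Prop :=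
  ∀ u : ι → ℤ, IsRat (∏ i, w i ^ u i) → ∀ i j : ι, u i = u j

/-- A subset `M ⊆ ℚ[G/H]` is ℚ-admissible: there is `μ ∈ ℚ[G]` with stabilizer
(under left multiplication) exactly `H` such that `mμ = 0` for all `m ∈ M`
(here `Σ_{g∈G} m(ḡ) • gμ = |H| ⋅ (mμ)`, so we express `mμ = 0` this way). -/
def IsQAdmissible {G : Type*} [Group G] (H : Subgroup G) (M : Set ((G ⧸ H) →₀ ℚ)) : Prop :=
  ∃ μ : MonoidAlgebra ℚ G,
    (∀ g : G, MonoidAlgebra.single g (1 : ℚ) * μ = μ ↔ g ∈ H) ∧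
    ∀ m ∈ M, (∑ᶠ g : G, m (QuotientGroup.mk g) • (MonoidAlgebra.single g (1 : ℚ) * μ)) = 0

/-- A ℚ-subspace of `ℚ[G/H]` is a `ℚ[G]`-submodule iff it is stable under the
permutation action of `G` on `G/H`. -/
def IsGStable {G : Type*} [Group G] (H : Subgroup G) (M : Submodule ℚ ((G ⧸ H) →₀ ℚ)) : Prop :=
  ∀ g : G, ∀ m ∈ M, Finsupp.mapDomain (fun x : G ⧸ H => g • x) m ∈ M

/-- The pair `(G,H)` is ℚ-trivial: the only ℚ-admissible `ℚ[G]`-submodules of `ℚ[G/H]`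
are `0` and `V₁` (the line of constant coefficient vectors). -/
def QTrivialPair {G : Type*} [Group G] (H : Subgroup G) : Prop :=
  ∀ M : Submodule ℚ ((G ⧸ H) →₀ ℚ), IsGStable H M →
    IsQAdmissible H (M : Set ((G ⧸ H) →₀ ℚ)) →
    M = ⊥ ∨ (M : Set ((G ⧸ H) →₀ ℚ)) = {m | ∃ a : ℚ, ∀ x, m x = a}

/-- The action of `G` on `G/H` is transitive. -/
def PairTransitive {G : Type*} [Group G] (H : Subgroup G) : Prop :=
  ∀ x y : G ⧸ H, ∃ g : G, g • x = y

/-- The action of `G` on `G/H` is doubly transitive. -/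
def PairDoublyTransitive {G : Type*} [Group G] (H : Subgroup G) : Prop :=
  ∀ x₁ x₂ y₁ y₂ : G ⧸ H, x₁ ≠ x₂ → y₁ ≠ y₂ → ∃ g : G, g • x₁ = y₁ ∧ g • x₂ = y₂

/-- The action of `G` on `G/H` is doubly homogeneous. -/
def PairDoublyHomogeneous {G : Type*} [Group G] (H : Subgroup G) : Prop :=
  ∀ x₁ x₂ y₁ y₂ : G ⧸ H, x₁ ≠ x₂ → y₁ ≠ y₂ →
    ∃ g : G, ({g • x₁, g • x₂} : Set (G ⧸ H)) = {y₁, y₂}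

/-- A set of permutations of `ι` acts transitively. -/
def SetTransitive {ι : Type*} (S : Set (Equiv.Perm ι)) : Prop :=
  ∀ i j : ι, ∃ σ ∈ S, σ i = j

/-- A set of permutations of `ι` acts doubly transitively. -/
def SetDoublyTransitive {ι : Type*} (S : Set (Equiv.Perm ι)) : Prop :=
  ∀ i j k l : ι, i ≠ j → k ≠ l → ∃ σ ∈ S, σ i = k ∧ σ j = l

/-- A set of permutations of `ι` acts doubly homogeneously. -/
def SetDoublyHomogeneous {ι : Type*} (S : Set (Equiv.Perm ι)) : Prop :=
  ∀ i j k l : ι, i ≠ j → k ≠ l → ∃ σ ∈ S, ({σ i, σ j} : Set ι) = {k, l}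

/-!
Let `p = |G/H|` and let `W ⊆ ℚ[G/H]` be the kernel of the augmentation (sum of
coefficients), of dimension `p - 1`. By Cauchy there is `g ∈ G` of order `p`; being
nontrivial on `G/H` (faithfulness) it acts as a `p`-cycle, so on `W` the operator of `g` is
killed by the cyclotomic polynomial `Φ_p`, which is irreducible of degree `p - 1 = dim W`.
Hence any `g`-stable subspace meeting `W` nontrivially contains `W`. A `G`-stable `M` not
made of constant vectors contains some `g'm - m ≠ 0` in `W`, hence every `aH - H`;
admissibility applied to these gives `aμ = μ` for all `a`, i.e. `H = G`, impossible as `p`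
is prime.
-/

open Function Module

section Augmentation

variable (R X : Type*) [Semiring R]

def augmentation : (X →₀ R) →ₗ[R] R := Finsupp.linearCombination R fun _ => 1

variable {R X}

@[simp]
lemma augmentation_single (x : X) (c : R) : augmentation R X (Finsupp.single x c) = c := by
  simp [augmentation]

@[simp]
lemma augmentation_mapDomain {Y : Type*} (f : X → Y) (w : X →₀ R) :
    augmentation R Y (Finsupp.mapDomain f w) = augmentation R X w :=
  Finsupp.linearCombination_mapDomain R f w

lemma augmentation_eq_sum [Fintype X] (w : X →₀ R) : augmentation R X w = ∑ x, w x := by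
  simp [augmentation, Finsupp.linearCombination_apply, Finsupp.sum_fintype]

lemma finrank_ker_augmentation {K : Type*} [Field K] [Fintype X] [Nonempty X] :
    finrank K (LinearMap.ker (augmentation K X)) = Fintype.card X - 1 := by
  have hsurj : LinearMap.range (augmentation K X) = ⊤ :=
    LinearMap.range_eq_top.2 fun c => ⟨Finsupp.single (Classical.arbitrary X) c, by simp⟩
  have := LinearMap.finrank_range_add_finrank_ker (augmentation K X)
  rw [hsurj, finrank_top, finrank_self, finrank_finsupp_self] at this
  omega

end Augmentation

section PermRep

variable (K G X : Type*) [CommSemiring K]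

def permRep [Monoid G] [MulAction G X] : Representation K G (X →₀ K) where
  toFun g := Finsupp.lmapDomain K K (g • ·)
  map_one' := by ext; simp
  map_mul' g h := by ext; simp [mul_smul]

variable {K G X} [Group G] [MulAction G X]

@[simp]
lemma augmentation_permRep (g : G) (f : X →₀ K) :
    augmentation K X (permRep K G X g f) = augmentation K X f :=
  augmentation_mapDomain _ f

lemma permRep_apply (g : G) (f : X →₀ K) (x : X) : permRep K G X g f x = f (g⁻¹ • x) := by
  conv_lhs => rw [← smul_inv_smul g x]
  exact Finsupp.mapDomain_apply (MulAction.injective g) f _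

end PermRep

lemma bijective_pow_smul_of_orderOf_eq_prime {G X : Type*} [Group G] [MulAction G X] [Finite X]
    {p : ℕ} [Fact p.Prime] {g : G} (hg : orderOf g = p) (hX : Nat.card X = p)
    (hnt : ∃ x : X, g • x ≠ x) (x : X) : Bijective fun i : Fin p => g ^ (i : ℕ) • x := by
  have bijective_of_ne {y : X} (hy : g • y ≠ y) : Bijective fun i : Fin p => g ^ (i : ℕ) • y := by
    have hper : minimalPeriod (g • ·) y = p := by
      refine minimalPeriod_eq_prime ?_ hy
      simp [IsPeriodicPt, IsFixedPt, smul_iterate, ← hg, pow_orderOf_eq_one]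
    refine Injective.bijective_of_nat_card_le (fun i j hij => Fin.ext ?_) (by simp [hX])
    refine iterate_injOn_Iio_minimalPeriod (f := (g • ·)) (x := y) (by simp [hper])
      (by simp [hper]) ?_
    simpa only [smul_iterate] using hij
  obtain ⟨x₀, hx₀⟩ := hnt
  refine bijective_of_ne fun hx => hx₀ ?_
  obtain ⟨i, rfl⟩ := (bijective_of_ne hx₀).surjective x
  rwa [smul_smul, ← pow_succ', pow_succ, mul_smul, smul_left_cancel_iff] at hx

lemma aeval_cyclotomic_permRep_inv_apply {K G X : Type*} [CommRing K] [Group G] [MulAction G X]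
    [Fintype X] {p : ℕ} [Fact p.Prime] {g : G}
    (hbij : ∀ x : X, Bijective fun i : Fin p => g ^ (i : ℕ) • x) (u : X →₀ K) (x : X) :
    aeval (permRep K G X g⁻¹) (cyclotomic p K) u x = augmentation K X u := by
  rw [cyclotomic_prime, map_sum, augmentation_eq_sum, ← (hbij x).sum_comp,
    Fin.sum_univ_eq_sum_range (fun i => u (g ^ i • x))]
  simp only [aeval_X_pow, LinearMap.sum_apply, Finsupp.finsetSum_apply, ← map_pow, permRep_apply,
    inv_pow, inv_inv]

lemma linearIndependent_pow_apply_of_irreducible {K V : Type*} [Field K] [AddCommGroup V]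
    [Module K V] {T : End K V} {P : K[X]} (hP : Irreducible P) {v : V} (hv : v ≠ 0)
    (hPv : aeval T P v = 0) : LinearIndependent K fun i : Fin P.natDegree => (T ^ (i : ℕ)) v := by
  rw [Fintype.linearIndependent_iff]
  intro c hc
  set f : K[X] := ∑ i, C (c i) * X ^ (i : ℕ)
  have hfv : aeval T f v = 0 := by
    simpa [f, map_sum, Module.End.mul_apply] using hc
  have hf : f = 0 := by
    by_contra hf
    have hdeg : f.natDegree < P.natDegree := (natDegree_lt_iff_degree_lt hf).2 (degree_sum_fin_lt c)
    have hndvd : ¬ P ∣ f := fun hdvd => (natDegree_le_of_dvd hdvd hf).not_gt hdeg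
    exact hv ((disjoint_ker_aeval_of_isCoprime T (hP.coprime_iff_not_dvd.2 hndvd)).le_bot
      ⟨hPv, hfv⟩)
  intro i
  simpa [f, Fin.val_inj] using congr_arg (coeff · i) hf

lemma le_of_mem_of_aeval_irreducible_eq_zero {K V : Type*} [Field K] [AddCommGroup V]
    [Module K V] [FiniteDimensional K V] {T : End K V} {P : K[X]} (hP : Irreducible P)
    {W N : Submodule K V} (hW : finrank K W = P.natDegree) (hPW : ∀ w ∈ W, aeval T P w = 0)
    (hWT : W ∈ T.invtSubmodule) (hNT : N ∈ T.invtSubmodule) {v : V} (hvW : v ∈ W) (hvN : v ∈ N)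
    (hv : v ≠ 0) : W ≤ N := by
  have hpow (i : ℕ) : (T ^ i) v ∈ N ⊓ W := by
    induction i with
    | zero => exact ⟨hvN, hvW⟩
    | succ i ih => rw [pow_succ', Module.End.mul_apply]; exact ⟨hNT ih.1, hWT ih.2⟩
  have hspan : Submodule.span K (Set.range fun i : Fin P.natDegree => (T ^ (i : ℕ)) v) ≤ N ⊓ W :=
    Submodule.span_le.2 (Set.range_subset_iff.2 fun i => hpow i)
  have hfinrank :=
    finrank_span_eq_card (linearIndependent_pow_apply_of_irreducible hP hv (hPW v hvW))
  refine inf_eq_right.1 (Submodule.eq_of_le_of_finrank_le inf_le_right ?_)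
  rw [hW, ← Fintype.card_fin P.natDegree, ← hfinrank]
  exact Submodule.finrank_mono hspan

lemma finite_of_forall_smul_eq_imp_eq_one {G X : Type*} [Group G] [MulAction G X] [Finite X]
    (hfaith : ∀ g : G, (∀ x : X, g • x = x) → g = 1) : Finite G :=
  Finite.of_injective (MulAction.toPermHom G X) <| (injective_iff_map_eq_one _).2 fun g hg =>
    hfaith g fun x => by simpa using congr($hg x)

lemma eq_bot_or_coe_eq_constants {K X : Type*} [Field K] {M : Submodule K (X →₀ K)}
    (hM : ∀ m ∈ M, ∃ a : K, ∀ x, m x = a) :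
    M = ⊥ ∨ (M : Set (X →₀ K)) = {m | ∃ a : K, ∀ x, m x = a} := by
  refine or_iff_not_imp_left.2 fun hbot => ?_
  obtain ⟨m, hmM, hm0⟩ := Submodule.exists_mem_ne_zero_of_ne_bot hbot
  obtain ⟨a, ha⟩ := hM m hmM
  have ha0 : a ≠ 0 := fun h => hm0 (Finsupp.ext fun x => by simp [ha, h])
  refine Set.Subset.antisymm hM fun n ⟨b, hb⟩ => ?_
  have hn : n = (b / a) • m := Finsupp.ext fun x => by simp [ha, hb, ha0]
  exact hn ▸ M.smul_mem _ hmM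

section Admissible

variable {G : Type*} [Group G] {H : Subgroup G}

lemma finsum_single_coset_smul [Finite G] {μ : MonoidAlgebra ℚ G}
    (hμ : ∀ h ∈ H, MonoidAlgebra.single h (1 : ℚ) * μ = μ) (a : G) (c : ℚ) :
    ∑ᶠ g : G, Finsupp.single (a : G ⧸ H) c g • (MonoidAlgebra.single g (1 : ℚ) * μ)
      = (Nat.card H * c) • (MonoidAlgebra.single a (1 : ℚ) * μ) := by
  classical
  have := Fintype.ofFinite G
  have hterm (h : G) : Finsupp.single (a : G ⧸ H) c (a * h : G)
      • (MonoidAlgebra.single (a * h) (1 : ℚ) * μ)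
      = if h ∈ H then c • (MonoidAlgebra.single a (1 : ℚ) * μ) else 0 := by
    split_ifs with hh
    · rw [QuotientGroup.mk_mul_of_mem a hh, Finsupp.single_eq_same, ← mul_one (1 : ℚ),
        ← MonoidAlgebra.single_mul_single, mul_assoc, hμ h hh, mul_one]
    · rw [Finsupp.single_eq_of_ne (by simpa [QuotientGroup.eq] using hh), zero_smul]
  rw [finsum_eq_sum_of_fintype, ← Equiv.sum_comp (Equiv.mulLeft a)]
  simp only [Equiv.coe_mulLeft, hterm, Finset.sum_ite, Finset.sum_const, smul_zero, add_zero,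
    mul_smul, ← Nat.cast_smul_eq_nsmul ℚ, Nat.card_eq_fintype_card, Fintype.card_subtype]

lemma eq_top_of_isQAdmissible [Finite G] {M : Set ((G ⧸ H) →₀ ℚ)} (hadm : IsQAdmissible H M)
    (hM : ∀ a : G, Finsupp.single (a : G ⧸ H) 1 - Finsupp.single ((1 : G) : G ⧸ H) 1 ∈ M) :
    H = ⊤ := by
  obtain ⟨μ, hstab, hkill⟩ := hadm
  have hμ (h : G) (hh : h ∈ H) := (hstab h).2 hh
  refine (Subgroup.eq_top_iff' H).2 fun a => (hstab a).1 ?_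
  have h0 := hkill _ (hM a)
  simp only [Finsupp.sub_apply, sub_smul] at h0
  rw [finsum_sub_distrib (Set.toFinite _) (Set.toFinite _), finsum_single_coset_smul hμ,
    finsum_single_coset_smul hμ, sub_eq_zero, ← MonoidAlgebra.one_def, one_mul] at h0
  exact smul_right_injective _ (by simpa using Nat.card_pos.ne') h0

end Admissible

section PrimeIndex

variable {G : Type*} [Group G] {H : Subgroup G}

lemma exists_ne_zero_mem_ker_augmentation {M : Submodule ℚ ((G ⧸ H) →₀ ℚ)} (hM : IsGStable H M)
    {m : (G ⧸ H) →₀ ℚ} (hm : m ∈ M) (hnc : ∀ a : ℚ, ∃ x, m x ≠ a) :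
    ∃ u ∈ M, u ≠ 0 ∧ augmentation ℚ (G ⧸ H) u = 0 := by
  obtain ⟨x, hx⟩ := hnc (m ((1 : G) : G ⧸ H))
  obtain ⟨g, rfl⟩ := QuotientGroup.mk_surjective x
  refine ⟨permRep ℚ G _ g m - m, M.sub_mem (hM g m hm) hm, fun h => hx ?_, by simp⟩
  have := congr($h (g : G ⧸ H))
  simp only [Finsupp.coe_sub, Pi.sub_apply, permRep_apply, MulAction.Quotient.smul_mk,
    smul_eq_mul, inv_mul_cancel, Finsupp.coe_zero, Pi.zero_apply] at this
  linarith

lemma ker_augmentation_le_of_mem [Finite G] [Fintype (G ⧸ H)]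
    (hfaith : ∀ g : G, (∀ x : G ⧸ H, g • x = x) → g = 1) (hprime : (Nat.card (G ⧸ H)).Prime)
    {M : Submodule ℚ ((G ⧸ H) →₀ ℚ)} (hM : IsGStable H M) {u : (G ⧸ H) →₀ ℚ} (huM : u ∈ M)
    (hu0 : u ≠ 0) (hu : augmentation ℚ (G ⧸ H) u = 0) :
    LinearMap.ker (augmentation ℚ (G ⧸ H)) ≤ M := by
  have : Fact (Nat.card (G ⧸ H)).Prime := ⟨hprime⟩
  obtain ⟨g, hg⟩ := exists_prime_orderOf_dvd_card' (Nat.card (G ⧸ H)) H.index_dvd_card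
  have hnt : ∃ x : G ⧸ H, g • x ≠ x := by
    by_contra! h
    exact hprime.ne_one (hg ▸ orderOf_eq_one_iff.2 (hfaith g h))
  have hbij := bijective_pow_smul_of_orderOf_eq_prime hg rfl hnt
  refine le_of_mem_of_aeval_irreducible_eq_zero (T := permRep ℚ G _ g⁻¹)
    (cyclotomic.irreducible_rat hprime.pos) ?_ ?_ ?_ (fun m hm => hM g⁻¹ m hm)
    (LinearMap.mem_ker.2 hu) huM hu0
  · rw [finrank_ker_augmentation, natDegree_cyclotomic, Nat.totient_prime hprime,
      Nat.card_eq_fintype_card]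
  · intro w hw
    ext x
    rw [aeval_cyclotomic_permRep_inv_apply hbij, LinearMap.mem_ker.1 hw, Finsupp.coe_zero,
      Pi.zero_apply]
  · intro w hw
    simpa using hw

theorem qTrivialPair_of_card_quotient_prime (H : Subgroup G)
    (hfaith : ∀ g : G, (∀ x : G ⧸ H, g • x = x) → g = 1) (hprime : (Nat.card (G ⧸ H)).Prime) :
    QTrivialPair H := by
  have : Finite (G ⧸ H) := Nat.finite_of_card_ne_zero hprime.ne_zero
  have : Finite G := finite_of_forall_smul_eq_imp_eq_one hfaith
  have := Fintype.ofFinite (G ⧸ H)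
  intro M hM hadm
  by_cases hconst : ∀ m ∈ M, ∃ a : ℚ, ∀ x, m x = a
  · exact eq_bot_or_coe_eq_constants hconst
  push Not at hconst
  obtain ⟨m, hmM, hnc⟩ := hconst
  obtain ⟨u, huM, hu0, hu⟩ := exists_ne_zero_mem_ker_augmentation hM hmM hnc
  have hker := ker_augmentation_le_of_mem hfaith hprime hM huM hu0 hu
  have hH : H = ⊤ := eq_top_of_isQAdmissible hadm fun a => hker (by simp)
  exact (hprime.ne_one (Subgroup.index_eq_one.2 hH)).elim

end PrimeIndex

theorem statement3_general (L : Type) [Field L] [Algebra ℚ L]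
    (H : Subgroup (L ≃ₐ[ℚ] L))
    (hfaith : ∀ g : L ≃ₐ[ℚ] L, (∀ x : (L ≃ₐ[ℚ] L) ⧸ H, g • x = x) → g = 1)
    (hprime : Nat.Prime (Nat.card ((L ≃ₐ[ℚ] L) ⧸ H))) :
    QTrivialPair H :=
  qTrivialPair_of_card_quotient_prime H hfaith hprime

/-- Let `L` be a finite Galois extension of `ℚ` with Galois group `G`,
and `H ≤ G` such that `G` acts faithfully on `G/H`. If the cardinality of `G/H` is a
prime number, then the pair `(G,H)` is ℚ-trivial. -/
theorem statement3 (L : Type) [Field L] [Algebra ℚ L] [FiniteDimensional ℚ L] [IsGalois ℚ L]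
    (H : Subgroup (L ≃ₐ[ℚ] L))
    (hfaith : ∀ g : L ≃ₐ[ℚ] L, (∀ x : (L ≃ₐ[ℚ] L) ⧸ H, g • x = x) → g = 1)
    (hprime : Nat.Prime (Nat.card ((L ≃ₐ[ℚ] L) ⧸ H))) :
    QTrivialPair H :=
  statement3_general L H hfaith hprime

end
end

section
/- Let f ∈ ℚ[x] with f(0) ≠ 0 have no multiple roots, and order its roots as α_1,…,α_s,γ_1,…,γ_t (n = s+t) where α_1,…,α_s are exactly the roots of f that are not roots of rational. If the Galois-like group G_f^B or the Galois-like group G_f^ℚ is doubly transitive as a permutation group on the roots, then every v ∈ R_f^ℚ (computed with respect to this ordering) satisfies v(1) = ⋯ = v(s) = (v(1)+⋯+v(n))/n. -/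
noncomputable section

open Polynomial

/-!
Put `w = n • v - (∑ j, v j) • 1`. The product of all roots is rational (Vieta), so `w ∈ R_f^ℚ`,
and the coordinates of `w` sum to `0`. Since `G_f^B ⊆ G_f^ℚ` and `G_f^ℚ` is a permutation group
preserving `R_f^ℚ`, summing the images of `w` under the stabilizer of an index `a` gives
`u ∈ R_f^ℚ` with `u a = |Stab a| • w a` and, by double transitivity, `u` constant off `a`.
Subtracting that constant leaves `e • 1_a ∈ R_f^ℚ`, where `e ≠ 0` if `w a ≠ 0` because the
coordinates of `u` still sum to `0`. Then `(r a) ^ e ∈ ℚ`, so `r a` is a root of rational;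
hence `w` vanishes at every index below `s`.
-/

lemma isRat_iff_mem_fieldRange {z : ℂ} : IsRat z ↔ z ∈ (algebraMap ℚ ℂ).fieldRange := by
  simp [IsRat, RingHom.mem_fieldRange, eq_comm]

lemma isRootOfRational_of_isRat_zpow {z : ℂ} {e : ℤ} (he : e ≠ 0) (h : IsRat (z ^ e)) :
    IsRootOfRational z := by
  have hsq : IsRat ((z ^ e) ^ e) :=
    isRat_iff_mem_fieldRange.2 (zpow_mem (isRat_iff_mem_fieldRange.1 h) e)
  obtain ⟨q, hq⟩ := hsq
  refine ⟨e.natAbs * e.natAbs, Nat.mul_pos (Int.natAbs_pos.2 he) (Int.natAbs_pos.2 he), q, ?_⟩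
  rw [← zpow_natCast, Int.natAbs_mul_self, zpow_mul, hq]

lemma roots_eq_map_univ_of_injective {K ι : Type*} [Field K] [Fintype ι] {p : K[X]}
    (hp : p ≠ 0) (hcard : Fintype.card ι = p.natDegree) {r : ι → K}
    (hinj : Function.Injective r) (hroot : ∀ i, p.IsRoot (r i)) :
    p.roots = Finset.univ.val.map r := by
  symm
  refine Multiset.eq_of_le_of_card_le ?_ ?_
  · refine (Multiset.le_iff_subset (Finset.univ.nodup.map hinj)).2 fun x hx => ?_
    obtain ⟨i, -, rfl⟩ := Multiset.mem_map.1 hx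
    exact (mem_roots hp).2 (hroot i)
  · simpa [hcard] using card_roots' p

lemma isRat_prod_of_injective_roots {ι : Type*} [Fintype ι] {f : ℚ[X]} (hf : f ≠ 0)
    (hcard : Fintype.card ι = f.natDegree) {r : ι → ℂ} (hinj : Function.Injective r)
    (hroot : ∀ i, aeval (r i) f = 0) : IsRat (∏ i, r i) := by
  set F := f.map (algebraMap ℚ ℂ)
  have hF : F ≠ 0 := (Polynomial.map_ne_zero_iff (algebraMap ℚ ℂ).injective).2 hf
  have hroots : F.roots = Finset.univ.val.map r :=
    roots_eq_map_univ_of_injective hF (by rw [natDegree_map, hcard]) hinj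
      fun i => by rw [IsRoot, eval_map_algebraMap, hroot i]
  have hvieta := (IsAlgClosed.splits F).coeff_zero_eq_leadingCoeff_mul_prod_roots
  rw [hroots, ← Finset.prod_eq_multiset_prod, natDegree_map, leadingCoeff_map, coeff_map] at hvieta
  simp only [eq_ratCast] at hvieta
  have hlc : (f.leadingCoeff : ℂ) ≠ 0 := by simpa using hf
  refine ⟨(-1) ^ f.natDegree * f.coeff 0 / f.leadingCoeff, ?_⟩
  push_cast
  rw [eq_div_iff hlc, hvieta, ← mul_assoc, ← mul_assoc, ← pow_add, ← two_mul, pow_mul, neg_one_sq,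
    one_pow, one_mul, mul_comm]

section RationalRelations

variable {ι : Type*} [Fintype ι]

-- The lattice `R_f^ℚ`; it is closed under addition only because no `r i` vanishes.
def ratRelations (r : ι → ℂ) (hr : ∀ i, r i ≠ 0) : AddSubgroup (ι → ℤ) where
  carrier := {v | IsRat (∏ i, r i ^ v i)}
  zero_mem' := ⟨1, by simp⟩
  add_mem' {v w} hv hw := by
    simp only [Set.mem_ofPred_eq, Pi.add_apply, zpow_add₀ (hr _), Finset.prod_mul_distrib]
    exact isRat_iff_mem_fieldRange.2 (mul_mem (isRat_iff_mem_fieldRange.1 hv)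
      (isRat_iff_mem_fieldRange.1 hw))
  neg_mem' {v} hv := by
    simp only [Set.mem_ofPred_eq, Pi.neg_apply, zpow_neg, Finset.prod_inv_distrib]
    exact isRat_iff_mem_fieldRange.2 (inv_mem (isRat_iff_mem_fieldRange.1 hv))

variable {r : ι → ℂ} {hr : ∀ i, r i ≠ 0}

@[simp]
lemma mem_ratRelations {v : ι → ℤ} : v ∈ ratRelations r hr ↔ IsRat (∏ i, r i ^ v i) :=
  Iff.rfl

lemma single_mem_ratRelations_iff [DecidableEq ι] {a : ι} {e : ℤ} :
    Pi.single a e ∈ ratRelations r hr ↔ IsRat (r a ^ e) := by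
  rw [mem_ratRelations, Fintype.prod_eq_single a fun i hi => by simp [hi], Pi.single_eq_same]

lemma prod_zpow_comp_perm (r : ι → ℂ) (σ : Equiv.Perm ι) (v : ι → ℤ) :
    ∏ i, r (σ i) ^ v i = ∏ i, r i ^ (v ∘ ⇑σ⁻¹) i := by
  rw [← Equiv.prod_comp σ (fun i => r i ^ (v ∘ ⇑σ⁻¹) i)]
  simp

lemma mem_galoisLikeQ_iff {σ : Equiv.Perm ι} :
    σ ∈ GaloisLikeQ r ↔
      ∀ v : ι → ℤ, IsRat (∏ i, r i ^ v i) → IsRat (∏ i, r i ^ (v ∘ ⇑σ⁻¹) i) := by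
  simp only [GaloisLikeQ, Set.mem_ofPred_eq, prod_zpow_comp_perm]

lemma galoisLikeB_subset_galoisLikeQ : GaloisLikeB r ⊆ GaloisLikeQ r :=
  fun _ hσ v hv => hσ v hv ▸ hv

def galoisLikeQSubmonoid (r : ι → ℂ) : Submonoid (Equiv.Perm ι) where
  carrier := GaloisLikeQ r
  one_mem' v hv := by simpa using hv
  mul_mem' hσ hτ := mem_galoisLikeQ_iff.2 fun v hv =>
    mem_galoisLikeQ_iff.1 hσ _ (mem_galoisLikeQ_iff.1 hτ v hv)

-- In a finite group a submonoid is a subgroup: `σ⁻¹` is a power of `σ`.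
def galoisLikeQSubgroup (r : ι → ℂ) : Subgroup (Equiv.Perm ι) where
  toSubmonoid := galoisLikeQSubmonoid r
  inv_mem' {σ} hσ := Submonoid.powers_le.2 hσ <|
    mem_powers_iff_mem_zpowers.2 (Subgroup.inv_mem _ (Subgroup.mem_zpowers σ))

end RationalRelations

lemma SetDoublyTransitive.mono {ι : Type*} {S T : Set (Equiv.Perm ι)} (hST : S ⊆ T)
    (hS : SetDoublyTransitive S) : SetDoublyTransitive T := fun i j k l hij hkl =>
  (hS i j k l hij hkl).imp fun _ ⟨hσ, h⟩ => ⟨hST hσ, h⟩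

section OrbitSum

open Equiv

variable {ι M : Type*} [AddCommMonoid M] (H : Subgroup (Perm ι)) [Fintype H]

def orbitSum (v : ι → M) : ι → M :=
  ∑ σ : H, v ∘ ⇑(σ : Perm ι)⁻¹

variable {H}

lemma orbitSum_apply (v : ι → M) (i : ι) : orbitSum H v i = ∑ σ : H, v ((σ : Perm ι)⁻¹ i) := by
  simp [orbitSum, Finset.sum_apply]

lemma orbitSum_apply_perm {ρ : Perm ι} (hρ : ρ ∈ H) (v : ι → M) (i : ι) :
    orbitSum H v (ρ i) = orbitSum H v i := by
  simp only [orbitSum_apply]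
  refine Fintype.sum_equiv (Equiv.mulLeft ⟨ρ, hρ⟩⁻¹) _ _ fun σ => ?_
  simp [Perm.mul_apply]

lemma orbitSum_apply_of_forall_fixed {a : ι} (ha : ∀ σ ∈ H, σ a = a) (v : ι → M) :
    orbitSum H v a = Fintype.card H • v a := by
  rw [orbitSum_apply, ← Finset.card_univ, ← Finset.sum_const]
  refine Finset.sum_congr rfl fun σ _ => ?_
  rw [Perm.inv_eq_iff_eq.2 (ha σ σ.2).symm]

lemma sum_orbitSum [Fintype ι] (v : ι → M) : ∑ i, orbitSum H v i = Fintype.card H • ∑ i, v i := by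
  simp only [orbitSum_apply]
  rw [Finset.sum_comm, ← Finset.card_univ, ← Finset.sum_const]
  exact Finset.sum_congr rfl fun σ _ => Equiv.sum_comp _ v

end OrbitSum

open Equiv in
theorem exists_single_mem_of_sum_eq_zero {ι : Type*} [Fintype ι] [DecidableEq ι]
    {G : Subgroup (Perm ι)} {L : AddSubgroup (ι → ℤ)}
    (hG : SetDoublyTransitive (G : Set (Perm ι))) (hL : ∀ σ ∈ G, ∀ v ∈ L, v ∘ ⇑σ⁻¹ ∈ L)
    (h1 : (1 : ι → ℤ) ∈ L) {v : ι → ℤ} (hv : v ∈ L) (hsum : ∑ i, v i = 0) {a : ι}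
    (ha : v a ≠ 0) : ∃ e : ℤ, e ≠ 0 ∧ Pi.single a e ∈ L := by
  classical
  obtain ⟨b, hba⟩ : ∃ b, b ≠ a := by
    by_contra! h
    exact ha (by rwa [Fintype.sum_eq_single a fun i hi => absurd (h i) hi] at hsum)
  let H := G ⊓ MulAction.stabilizer (Perm ι) a
  have hH : ∀ σ ∈ H, σ ∈ G ∧ σ a = a := fun σ hσ => hσ
  set u := orbitSum H v
  have hu : u ∈ L := AddSubgroup.sum_mem _ fun σ _ => hL σ (hH σ σ.2).1 v hv
  have hua : u a = Fintype.card H • v a :=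
    orbitSum_apply_of_forall_fixed (fun σ hσ => (hH σ hσ).2) v
  -- The stabilizer of `a` is transitive on the other indices, so `u` is constant there.
  have hub : ∀ m ≠ a, u m = u b := by
    intro m hm
    obtain ⟨ρ, hρG, hρa, hρb⟩ := hG a b a m hba.symm hm.symm
    rw [← hρb]
    exact orbitSum_apply_perm (Subgroup.mem_inf.2 ⟨hρG, hρa⟩) v b
  have hu_eq : u = Pi.single a (u a - u b) + u b • 1 := by
    ext m
    rcases eq_or_ne m a with rfl | hm
    · simp
    · simp [hm, hub m hm]
  refine ⟨u a - u b, fun he => ?_, ?_⟩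
  · have hsum_u : ∑ i, u i = 0 := by rw [sum_orbitSum, hsum, smul_zero]
    rw [hu_eq, he, Pi.single_zero, zero_add] at hsum_u
    have hb0 : u b = 0 := (by simpa using hsum_u : Fintype.card ι = 0 ∨ u b = 0).resolve_left
      (Fintype.card_pos_iff.2 ⟨a⟩).ne'
    have : Fintype.card H • v a = 0 := by rw [← hua]; linarith
    simp [ha] at this
  · rw [eq_sub_of_add_eq hu_eq.symm]
    exact sub_mem hu (AddSubgroup.zsmul_mem _ h1 _)

theorem statement11_general (f : Polynomial ℚ) (hf0 : f.eval 0 ≠ 0) (n : ℕ) (hn : n = f.natDegree)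
    (r : Fin n → ℂ) (hinj : Function.Injective r)
    (hroot : ∀ i, Polynomial.aeval (r i) f = 0)
    (s : ℕ)
    (horder : ∀ i : Fin n, (i : ℕ) < s ↔ ¬ IsRootOfRational (r i))
    (h2t : SetDoublyTransitive (GaloisLikeB r) ∨ SetDoublyTransitive (GaloisLikeQ r)) :
    ∀ v : Fin n → ℤ, IsRat (∏ i, r i ^ v i) →
      (∀ i j : Fin n, (i : ℕ) < s → (j : ℕ) < s → v i = v j) ∧
      (∀ i : Fin n, (i : ℕ) < s → (n : ℤ) * v i = ∑ j, v j) := by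
  have hr : ∀ i, r i ≠ 0 := fun i h0 => hf0 <| by
    simpa [h0, aeval_def, eval₂_at_zero, coeff_zero_eq_eval_zero] using hroot i
  have hf : f ≠ 0 := fun h => hf0 (by simp [h])
  have h1 : (1 : Fin n → ℤ) ∈ ratRelations r hr := by
    simpa using isRat_prod_of_injective_roots hf (by simp [hn]) hinj hroot
  have hG : SetDoublyTransitive (galoisLikeQSubgroup r : Set (Equiv.Perm (Fin n))) :=
    h2t.elim (fun hB => hB.mono galoisLikeB_subset_galoisLikeQ) id
  intro v hv
  have hcentered : ∀ i : Fin n, (i : ℕ) < s → (n : ℤ) * v i = ∑ j, v j := by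
    intro i hi
    by_contra hne
    let w : Fin n → ℤ := (n : ℤ) • v - (∑ j, v j) • 1
    have hw : w ∈ ratRelations r hr :=
      sub_mem (AddSubgroup.zsmul_mem _ hv _) (AddSubgroup.zsmul_mem _ h1 _)
    have hwsum : ∑ j, w j = 0 := by simp [w, Finset.sum_sub_distrib, ← Finset.mul_sum]
    obtain ⟨e, he, hmem⟩ := exists_single_mem_of_sum_eq_zero hG
      (fun σ hσ => mem_galoisLikeQ_iff.1 hσ) h1 hw hwsum (a := i)
      (by simpa [w, sub_eq_zero] using hne)
    exact (horder i).1 hi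
      (isRootOfRational_of_isRat_zpow he (single_mem_ratRelations_iff.1 hmem))
  refine ⟨fun i j hi hj => ?_, hcentered⟩
  exact mul_left_cancel₀ (Nat.cast_ne_zero.2 i.pos.ne')
    ((hcentered i hi).trans (hcentered j hj).symm)

/-- Order the roots of `f` as `α₁,…,α_s,γ₁,…,γ_t` (`n = s + t`) where
`α₁,…,α_s` are exactly the roots that are not roots of rational. If `G_f^B` or `G_f^ℚ`
is doubly transitive on the roots, then every `v ∈ R_f^ℚ` satisfies
`v(1) = ⋯ = v(s) = (v(1)+⋯+v(n))/n`. -/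
theorem statement11 (f : Polynomial ℚ) (hf0 : f.eval 0 ≠ 0) (n : ℕ) (hn : n = f.natDegree)
    (r : Fin n → ℂ) (hinj : Function.Injective r)
    (hroot : ∀ i, Polynomial.aeval (r i) f = 0)
    (hall : ∀ z : ℂ, Polynomial.aeval z f = 0 → ∃ i, r i = z)
    (s t : ℕ) (hst : n = s + t)
    (horder : ∀ i : Fin n, (i : ℕ) < s ↔ ¬ IsRootOfRational (r i))
    (h2t : SetDoublyTransitive (GaloisLikeB r) ∨ SetDoublyTransitive (GaloisLikeQ r)) :
    ∀ v : Fin n → ℤ, IsRat (∏ i, r i ^ v i) →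
      (∀ i j : Fin n, (i : ℕ) < s → (j : ℕ) < s → v i = v j) ∧
      (∀ i : Fin n, (i : ℕ) < s → (n : ℤ) * v i = ∑ j, v j) :=
  statement11_general f hf0 n hn r hinj hroot s horder h2t

end
end
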